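/- Let x, y be measurable functions on [0,∞) vanishing at infinity in measure with x submajorized by y (∫₀ᵗ x* ≤ ∫₀ᵗ y* for all t > 0), and let z be a nonnegative nonincreasing function. Then xz is submajorized by y* z: ∫₀ᵗ (xz)*(s) ds ≤ ∫₀ᵗ y*(s) z(s) ds for all t > 0. -/

import Mathlib

open MeasureTheory

/-- The decreasing rearrangement of `|f|` with respect to the measure `μ`. -/
noncomputable def rearr {α : Type*} [MeasurableSpace α] (μ : Measure α)
    (f : α → ℝ) (t : ℝ) : ℝ :=
  sInf {s : ℝ | 0 ≤ s ∧ μ {u | s < |f u|} ≤ ENNReal.ofReal t}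

/-- `f` vanishes at infinity in measure: every level set `{|f| > ε}` with `ε > 0`
has finite measure. -/
def VanishesInMeasure {α : Type*} [MeasurableSpace α] (μ : Measure α) (f : α → ℝ) : Prop :=
  ∀ ε : ℝ, 0 < ε → μ {u | ε < |f u|} < ⊤

/-- A symmetric function space on a measure space: a linear subspace of the measurable
functions vanishing at infinity in measure, with a complete norm that is monotone with
respect to comparison of decreasing rearrangements. -/
structure SymmFnSpace (α : Type*) [MeasurableSpace α] (μ : Measure α) where
  carrier : Set (α → ℝ)
  N : (α → ℝ) → ℝ
  zero_mem : (0 : α → ℝ) ∈ carrier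
  add_mem : ∀ {x y : α → ℝ}, x ∈ carrier → y ∈ carrier → x + y ∈ carrier
  smul_mem : ∀ (c : ℝ) {x : α → ℝ}, x ∈ carrier → c • x ∈ carrier
  measurable_mem : ∀ {x : α → ℝ}, x ∈ carrier → Measurable x
  vanish_mem : ∀ {x : α → ℝ}, x ∈ carrier → VanishesInMeasure μ x
  norm_nonneg : ∀ x : α → ℝ, 0 ≤ N x
  norm_eq_zero : ∀ {x : α → ℝ}, x ∈ carrier → N x = 0 → x =ᵐ[μ] 0
  norm_add_le : ∀ {x y : α → ℝ}, x ∈ carrier → y ∈ carrier → N (x + y) ≤ N x + N y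
  norm_smul : ∀ (c : ℝ) (x : α → ℝ), N (c • x) = |c| * N x
  symm : ∀ {x y : α → ℝ}, Measurable x → VanishesInMeasure μ x → y ∈ carrier →
    (∀ t : ℝ, 0 < t → rearr μ x t ≤ rearr μ y t) → x ∈ carrier ∧ N x ≤ N y
  complete : ∀ f : ℕ → (α → ℝ), (∀ n, f n ∈ carrier) →
    (∀ ε : ℝ, 0 < ε → ∃ n₀, ∀ m ≥ n₀, ∀ n ≥ n₀, N (f m - f n) < ε) →
    ∃ g ∈ carrier, ∀ ε : ℝ, 0 < ε → ∃ n₀, ∀ n ≥ n₀, N (f n - g) < ε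

open scoped ENNReal

/-- Lebesgue measure on the half-line `[0, ∞)`. -/
noncomputable def mu0 : MeasureTheory.Measure ℝ := MeasureTheory.volume.restrict (Set.Ici 0)

/-!
Everything is read off the distribution function `d_f(a) = μ{|f| > a}`. For an initial segment
`S` of `(0, ∞)` one has `∫_S f* = ∫_0^∞ min(|S|, d_f(a)) da`, so the hypothesis says
`∫ min(R, d_x) ≤ ∫ min(R, d_y)` for every finite `R`.

Lebesgue measure has no atoms, so `∫_0^t (xz)* = ∫_G |x| z` for a set `G` with `|G| ≤ t`: a
superlevel set of `|xz|` padded with part of its level set at height `(xz)*(t)`. Slicing `z`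
into its superlevel sets, which are initial segments, gives
`∫_G |x| z = ∫_0^∞ ∫_{G ∩ {z > b}} |x| db`, and each slice is at most
`∫ min(|(0, t] ∩ {z > b}|, d_x)` (Hardy–Littlewood). Replacing `d_x` by `d_y` and gluing the
slices back together gives `∫_0^t y* z`.
-/

open Set Filter Topology

section Distribution

variable {α : Type*} [MeasurableSpace α] {μ : Measure α} {f : α → ℝ}

noncomputable def distribution (μ : Measure α) (f : α → ℝ) (a : ℝ) : ℝ≥0∞ :=
  μ {u | a < |f u|}

lemma distribution_antitone : Antitone (distribution μ f) :=
  fun _ _ hab => measure_mono fun _ hu => lt_of_le_of_lt hab hu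

lemma distribution_eq_iSup (a : ℝ) :
    distribution μ f a = ⨆ n : ℕ, distribution μ f (a + 1 / (n + 1)) := by
  have hunion : {u | a < |f u|} = ⋃ n : ℕ, {u | a + 1 / ((n : ℝ) + 1) < |f u|} := by
    ext u
    simp only [mem_ofPred_eq, mem_iUnion]
    constructor
    · intro hu
      obtain ⟨n, hn⟩ := exists_nat_one_div_lt (sub_pos.2 hu)
      exact ⟨n, by linarith⟩
    · rintro ⟨n, hn⟩
      linarith [Nat.one_div_pos_of_nat (α := ℝ) (n := n)]
  rw [distribution, hunion]
  refine Monotone.measure_iUnion fun m n hmn u (hu : a + 1 / ((m : ℝ) + 1) < |f u|) => ?_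
  have : 1 / ((n : ℝ) + 1) ≤ 1 / ((m : ℝ) + 1) := Nat.one_div_le_one_div hmn
  change a + 1 / ((n : ℝ) + 1) < |f u|
  linarith

lemma tendsto_distribution_atTop (hf : Measurable f) (hfv : VanishesInMeasure μ f) :
    Tendsto (distribution μ f) atTop (𝓝 0) := by
  have hempty : (⋂ a : ℝ, {u | a < |f u|}) = ∅ :=
    eq_empty_of_forall_notMem fun u hu => lt_irrefl |f u| (mem_iInter.1 hu |f u|)
  have := tendsto_measure_iInter_atTop (μ := μ) (s := fun a : ℝ => {u | a < |f u|})
    (fun a => (measurableSet_lt measurable_const hf.abs).nullMeasurableSet)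
    (fun a b hab u hu => lt_of_le_of_lt hab hu) ⟨1, (hfv 1 one_pos).ne⟩
  rwa [hempty, measure_empty] at this

lemma VanishesInMeasure.mul_of_abs_le {g : α → ℝ} {C : ℝ} (hf : VanishesInMeasure μ f)
    (hg : ∀ u, |g u| ≤ C) : VanishesInMeasure μ (f * g) := by
  intro ε hε
  have hC : (0 : ℝ) < |C| + 1 := by positivity
  refine lt_of_le_of_lt (measure_mono fun u (hu : ε < |f u * g u|) => ?_)
    (hf (ε / (|C| + 1)) (div_pos hε hC))
  change ε / (|C| + 1) < |f u|
  rw [div_lt_iff₀ hC]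
  have hgC : |g u| ≤ |C| + 1 := by linarith [hg u, le_abs_self C]
  calc ε < |f u * g u| := hu
    _ = |f u| * |g u| := abs_mul _ _
    _ ≤ |f u| * (|C| + 1) := mul_le_mul_of_nonneg_left hgC (abs_nonneg _)

end Distribution

section LayerCake

variable {α : Type*} [MeasurableSpace α] {μ : Measure α} {f : α → ℝ}

lemma setLIntegral_ofReal_abs_eq (hf : Measurable f) (A : Set α) :
    ∫⁻ u in A, ENNReal.ofReal |f u| ∂μ = ∫⁻ a in Ioi 0, μ ({u | a < |f u|} ∩ A) := by
  rw [lintegral_eq_lintegral_meas_lt _ (ae_of_all _ fun u => abs_nonneg (f u))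
    hf.abs.aemeasurable]
  exact lintegral_congr fun a => Measure.restrict_apply (measurableSet_lt measurable_const hf.abs)

lemma setLIntegral_ofReal_abs_le (hf : Measurable f) (A : Set α) :
    ∫⁻ u in A, ENNReal.ofReal |f u| ∂μ ≤ ∫⁻ a in Ioi 0, min (μ A) (distribution μ f a) := by
  rw [setLIntegral_ofReal_abs_eq hf]
  exact lintegral_mono fun a =>
    le_min (measure_mono inter_subset_right) (measure_mono inter_subset_left)

lemma setLIntegral_mul_ofReal_eq {F : α → ℝ≥0∞} {g : α → ℝ} {A : Set α}
    (hF : AEMeasurable F (μ.restrict A)) (hg : Measurable g) (hg0 : ∀ u, 0 ≤ g u) :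
    ∫⁻ u in A, F u * ENNReal.ofReal (g u) ∂μ
      = ∫⁻ b in Ioi 0, ∫⁻ u in {u | b < g u} ∩ A, F u ∂μ := by
  rw [← Pi.mul_def, ← lintegral_withDensity_eq_lintegral_mul₀ hF hg.ennreal_ofReal.aemeasurable,
    lintegral_eq_lintegral_meas_lt _ (ae_of_all _ hg0) hg.aemeasurable]
  refine lintegral_congr fun b => ?_
  rw [withDensity_apply _ (measurableSet_lt measurable_const hg),
    Measure.restrict_restrict (measurableSet_lt measurable_const hg)]

end LayerCake

section LowerSet

lemma Antitone.isLowerSet_lt {β γ : Type*} [Preorder β] [Preorder γ] {g : β → γ}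
    (hg : Antitone g) (b : γ) : IsLowerSet {s | b < g s} :=
  fun _ _ hvu hu => hu.trans_le (hg hvu)

lemma IsLowerSet.measure_inter_inter {β : Type*} [MeasurableSpace β] [LinearOrder β]
    {ν : Measure β} {L₁ L₂ : Set β} (h₁ : IsLowerSet L₁) (h₂ : IsLowerSet L₂) (A : Set β) :
    ν (A ∩ (L₁ ∩ L₂)) = min (ν (A ∩ L₁)) (ν (A ∩ L₂)) := by
  rcases h₁.total h₂ with h | h
  · rw [inter_eq_left.2 h, min_eq_left (measure_mono (inter_subset_inter_right A h))]
  · rw [inter_eq_right.2 h, min_eq_right (measure_mono (inter_subset_inter_right A h))]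

lemma volume_Ioi_inter_ofReal_lt (c : ℝ≥0∞) :
    volume (Ioi 0 ∩ {s : ℝ | ENNReal.ofReal s < c}) = c := by
  rcases eq_or_ne c ⊤ with rfl | hc
  · simp
  · have : Ioi 0 ∩ {s : ℝ | ENNReal.ofReal s < c} = Ioo 0 c.toReal := by
      ext s
      simp only [mem_inter_iff, mem_Ioi, mem_ofPred_eq, mem_Ioo, and_congr_right_iff]
      exact fun hs => ENNReal.ofReal_lt_iff_lt_toReal hs.le hc
    rw [this, Real.volume_Ioo, sub_zero, ENNReal.ofReal_toReal hc]

end LowerSet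

section Rearrangement

variable {α : Type*} [MeasurableSpace α] {μ : Measure α} {f : α → ℝ}

lemma rearr_eq_sInf (t : ℝ) :
    rearr μ f t = sInf {s | 0 ≤ s ∧ distribution μ f s ≤ ENNReal.ofReal t} := rfl

lemma rearr_nonneg (t : ℝ) : 0 ≤ rearr μ f t := Real.sInf_nonneg fun _ hs => hs.1

lemma rearr_congr_ae {g : α → ℝ} (hfg : f =ᵐ[μ] g) : rearr μ f = rearr μ g := by
  have hdist : distribution μ f = distribution μ g := funext fun a =>
    measure_congr (hfg.mono fun u (hu : f u = g u) =>
      show (a < |f u|) = (a < |g u|) by rw [hu])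
  funext t
  rw [rearr_eq_sInf, rearr_eq_sInf, hdist]

lemma lt_rearr_iff (hf : Measurable f) (hfv : VanishesInMeasure μ f) {s a : ℝ} (hs : 0 < s)
    (ha : 0 ≤ a) : a < rearr μ f s ↔ ENNReal.ofReal s < distribution μ f a := by
  rw [rearr_eq_sInf]
  set A := {v | 0 ≤ v ∧ distribution μ f v ≤ ENNReal.ofReal s}
  have hbdd : BddBelow A := ⟨0, fun v hv => hv.1⟩
  constructor
  · intro h
    by_contra! hd
    exact (csInf_le hbdd ⟨ha, hd⟩).not_gt h
  · intro hd
    by_contra! h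
    obtain ⟨v₀, hv₀, hv₀0⟩ := (((tendsto_distribution_atTop hf hfv).eventually
      (gt_mem_nhds (ENNReal.ofReal_pos.2 hs))).and (eventually_ge_atTop 0)).exists
    refine hd.not_ge ?_
    rw [distribution_eq_iSup]
    refine iSup_le fun n => ?_
    obtain ⟨v, hvA, hv⟩ := Real.lt_sInf_add_pos (⟨v₀, hv₀0, hv₀.le⟩ : A.Nonempty)
      (Nat.one_div_pos_of_nat (n := n))
    exact (distribution_antitone (by linarith)).trans hvA.2

lemma distribution_rearr_le (hf : Measurable f) (hfv : VanishesInMeasure μ f) {s : ℝ}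
    (hs : 0 < s) : distribution μ f (rearr μ f s) ≤ ENNReal.ofReal s :=
  not_lt.1 fun h => lt_irrefl _ ((lt_rearr_iff hf hfv hs (rearr_nonneg s)).2 h)

lemma ofReal_le_measure_rearr_le (hf : Measurable f) (hfv : VanishesInMeasure μ f) {s : ℝ}
    (hs : 0 < s) (hpos : 0 < rearr μ f s) :
    ENNReal.ofReal s ≤ μ {u | rearr μ f s ≤ |f u|} := by
  obtain ⟨a, ha_mono, ha_mem, ha_lim⟩ := exists_seq_strictMono_tendsto' hpos
  have hinter : {u | rearr μ f s ≤ |f u|} = ⋂ n, {u | a n < |f u|} := by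
    ext u
    simp only [mem_ofPred_eq, mem_iInter]
    exact ⟨fun h n => (ha_mem n).2.trans_le h,
      fun h => le_of_tendsto' ha_lim fun n => (h n).le⟩
  rw [hinter, Antitone.measure_iInter (s := fun n => {u | a n < |f u|})
    (fun m n hmn u hu => (ha_mono.monotone hmn).trans_lt hu)
    (fun n => (measurableSet_lt measurable_const hf.abs).nullMeasurableSet)
    ⟨0, (hfv _ (ha_mem 0).1).ne⟩]
  exact le_iInf fun n => ((lt_rearr_iff hf hfv hs (ha_mem n).1.le).1 (ha_mem n).2).le

lemma rearr_antitoneOn (hf : Measurable f) (hfv : VanishesInMeasure μ f) :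
    AntitoneOn (rearr μ f) (Ioi 0) := by
  intro s hs s' hs' hss'
  by_contra! h
  have h' := (lt_rearr_iff hf hfv hs' (rearr_nonneg s)).1 h
  exact lt_irrefl _
    ((lt_rearr_iff hf hfv hs (rearr_nonneg s)).2 ((ENNReal.ofReal_le_ofReal hss').trans_lt h'))

lemma aemeasurable_rearr_restrict (hf : Measurable f) (hfv : VanishesInMeasure μ f)
    {S : Set ℝ} (hS : S ⊆ Ioi 0) : AEMeasurable (rearr μ f) (volume.restrict S) :=
  (aemeasurable_restrict_of_antitoneOn measurableSet_Ioi (rearr_antitoneOn hf hfv)).mono_measure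
    (Measure.restrict_mono hS le_rfl)

lemma setLIntegral_rearr_eq (hf : Measurable f) (hfv : VanishesInMeasure μ f) {L : Set ℝ}
    (hL : IsLowerSet L) :
    ∫⁻ s in Ioi 0 ∩ L, ENNReal.ofReal (rearr μ f s)
      = ∫⁻ a in Ioi 0, min (volume (Ioi 0 ∩ L)) (distribution μ f a) := by
  rw [lintegral_eq_lintegral_meas_lt _ (ae_of_all _ rearr_nonneg)
    (aemeasurable_rearr_restrict hf hfv inter_subset_left)]
  refine setLIntegral_congr_fun measurableSet_Ioi fun a (ha : 0 < a) => ?_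
  have hset : {s | a < rearr μ f s} ∩ (Ioi 0 ∩ L)
      = Ioi 0 ∩ (L ∩ {s | ENNReal.ofReal s < distribution μ f a}) := by
    ext s
    simp only [mem_inter_iff, mem_ofPred_eq, mem_Ioi]
    constructor
    · rintro ⟨h, hs, hsL⟩
      exact ⟨hs, hsL, (lt_rearr_iff hf hfv hs ha.le).1 h⟩
    · rintro ⟨hs, hsL, h⟩
      exact ⟨(lt_rearr_iff hf hfv hs ha.le).2 h, hs, hsL⟩
  have hlower : IsLowerSet {s : ℝ | ENNReal.ofReal s < distribution μ f a} :=
    fun _ _ hba h => (ENNReal.ofReal_le_ofReal hba).trans_lt h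
  rw [Measure.restrict_apply' (measurableSet_Ioi.inter hL.ordConnected.measurableSet), hset,
    hL.measure_inter_inter hlower, volume_Ioi_inter_ofReal_lt]

lemma setLIntegral_rearr_Ioc (hf : Measurable f) (hfv : VanishesInMeasure μ f) (t : ℝ) :
    ∫⁻ s in Ioc 0 t, ENNReal.ofReal (rearr μ f s)
      = ∫⁻ a in Ioi 0, min (ENNReal.ofReal t) (distribution μ f a) := by
  rw [← Ioi_inter_Iic, setLIntegral_rearr_eq hf hfv (isLowerSet_Iic t), Ioi_inter_Iic,
    Real.volume_Ioc, sub_zero]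

lemma setLIntegral_rearr_mul_eq (hf : Measurable f) (hfv : VanishesInMeasure μ f) {g : ℝ → ℝ}
    (hg : Antitone g) (hg0 : ∀ u, 0 ≤ g u) (t : ℝ) :
    ∫⁻ s in Ioc 0 t, ENNReal.ofReal (rearr μ f s) * ENNReal.ofReal (g s)
      = ∫⁻ b in Ioi 0, ∫⁻ a in Ioi 0,
          min (volume ({s | b < g s} ∩ Ioc 0 t)) (distribution μ f a) := by
  rw [setLIntegral_mul_ofReal_eq
    (aemeasurable_rearr_restrict hf hfv Ioc_subset_Ioi_self).ennreal_ofReal hg.measurable hg0]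
  refine lintegral_congr fun b => ?_
  rw [← Ioi_inter_Iic, inter_left_comm,
    setLIntegral_rearr_eq hf hfv ((hg.isLowerSet_lt b).inter (isLowerSet_Iic t))]

lemma lintegral_min_distribution_le {x y : α → ℝ} (hx : Measurable x)
    (hxv : VanishesInMeasure μ x) (hy : Measurable y) (hyv : VanishesInMeasure μ y)
    (hmaj : ∀ t : ℝ, 0 < t → ∫⁻ s in Ioc 0 t, ENNReal.ofReal (rearr μ x s)
      ≤ ∫⁻ s in Ioc 0 t, ENNReal.ofReal (rearr μ y s)) {R : ℝ≥0∞} (hR : R ≠ ⊤) :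
    ∫⁻ a in Ioi 0, min R (distribution μ x a) ≤ ∫⁻ a in Ioi 0, min R (distribution μ y a) := by
  rcases eq_or_ne R 0 with rfl | hR0
  · simp
  rw [← ENNReal.ofReal_toReal hR, ← setLIntegral_rearr_Ioc hx hxv, ← setLIntegral_rearr_Ioc hy hyv]
  exact hmaj _ (ENNReal.toReal_pos hR0 hR)

end Rearrangement

section HalfLine

lemma mu0_eq_restrict_Ioi : mu0 = volume.restrict (Ioi 0) :=
  Measure.restrict_congr_set Ioi_ae_eq_Ici.symm

lemma mu0_inter_le_volume {L G : Set ℝ} (hL : IsLowerSet L) {t : ℝ}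
    (hG : mu0 G ≤ ENNReal.ofReal t) : mu0 (L ∩ G) ≤ volume (L ∩ Ioc 0 t) := by
  rw [← Ioi_inter_Iic, inter_left_comm, hL.measure_inter_inter (isLowerSet_Iic t),
    Ioi_inter_Iic, Real.volume_Ioc, sub_zero]
  refine le_min ?_ ((measure_mono inter_subset_right).trans hG)
  calc mu0 (L ∩ G) ≤ mu0 L := measure_mono inter_subset_left
    _ = volume (Ioi 0 ∩ L) := by
        rw [mu0_eq_restrict_Ioi, Measure.restrict_apply' measurableSet_Ioi, inter_comm]

lemma exists_subset_mu0_eq {A : Set ℝ} (hA : MeasurableSet A) (hfin : mu0 A ≠ ⊤) {r : ℝ≥0∞}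
    (hr : r ≤ mu0 A) : ∃ E ⊆ A, MeasurableSet E ∧ mu0 E = r := by
  rcases hr.eq_or_lt with rfl | hlt
  · exact ⟨A, subset_rfl, hA, rfl⟩
  set ν := mu0.restrict A
  have : IsFiniteMeasure ν := isFiniteMeasure_restrict.2 hfin
  have hcont : Continuous fun c => ν.real (Iic c) := by
    refine (LipschitzWith.of_le_add fun c d => ?_).continuous
    have hIoc : ν (Ioc d c) ≤ ENNReal.ofReal (dist c d) :=
      calc ν (Ioc d c) ≤ volume (Ioc d c) :=
            (Measure.restrict_le_self.trans Measure.restrict_le_self) _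
        _ = ENNReal.ofReal (c - d) := Real.volume_Ioc
        _ ≤ ENNReal.ofReal (dist c d) := ENNReal.ofReal_le_ofReal (Real.dist_eq c d ▸ le_abs_self _)
    calc ν.real (Iic c) ≤ ν.real (Iic d ∪ Ioc d c) := measureReal_mono Iic_subset_Iic_union_Ioc
      _ ≤ ν.real (Iic d) + ν.real (Ioc d c) := measureReal_union_le _ _
      _ ≤ ν.real (Iic d) + dist c d := by
          gcongr
          exact ENNReal.toReal_le_of_le_ofReal dist_nonneg hIoc
  have hbot : ν.real (Iic (-1)) ≤ r.toReal := by
    have : ν (Iic (-1)) = 0 := by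
      rw [Measure.restrict_apply measurableSet_Iic]
      refine measure_mono_null inter_subset_left ?_
      rw [mu0, Measure.restrict_apply' measurableSet_Ici, Iic_inter_Ici,
        Icc_eq_empty (by norm_num), measure_empty]
    simp [Measure.real, this]
  obtain ⟨c₁, hc₁⟩ : ∃ c, r < ν (Iic c) := by
    have h := tendsto_measure_Iic_atTop ν
    rw [Measure.restrict_apply_univ] at h
    exact (h.eventually (lt_mem_nhds hlt)).exists
  obtain ⟨c, hc⟩ := mem_range_of_exists_le_of_exists_ge hcont ⟨-1, hbot⟩
    ⟨c₁, ENNReal.toReal_mono (measure_ne_top _ _) hc₁.le⟩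
  refine ⟨Iic c ∩ A, inter_subset_right, measurableSet_Iic.inter hA, ?_⟩
  rw [← Measure.restrict_apply measurableSet_Iic]
  exact (ENNReal.toReal_eq_toReal_iff' (measure_ne_top _ _) hlt.ne_top).1 hc

variable {w : ℝ → ℝ}

lemma exists_mu0_between_levelSets (hw : Measurable w) (hwv : VanishesInMeasure mu0 w) {t : ℝ}
    (ht : 0 < t) : ∃ G, {u | rearr mu0 w t < |w u|} ⊆ G ∧ G ⊆ {u | rearr mu0 w t ≤ |w u|} ∧
      mu0 G ≤ ENNReal.ofReal t ∧ (0 < rearr mu0 w t → mu0 G = ENNReal.ofReal t) := by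
  set l := rearr mu0 w t
  have hd : distribution mu0 w l ≤ ENNReal.ofReal t := distribution_rearr_le hw hwv ht
  rcases (rearr_nonneg (μ := mu0) (f := w) t).eq_or_lt with h0 | hpos
  · exact ⟨_, subset_rfl, fun u (hu : l < |w u|) => show l ≤ |w u| from hu.le, hd,
      fun h => absurd h0 h.ne⟩
  have hlevel : MeasurableSet {u | |w u| = l} := measurableSet_eq_fun hw.abs measurable_const
  have hfin : mu0 {u | |w u| = l} ≠ ⊤ :=
    ne_top_of_le_ne_top (hwv (l / 2) (half_pos hpos)).ne
      (measure_mono fun u (hu : |w u| = l) => show l / 2 < |w u| by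
        rw [hu]; exact half_lt_self hpos)
  have hr : ENNReal.ofReal t - distribution mu0 w l ≤ mu0 {u | |w u| = l} := by
    rw [tsub_le_iff_right]
    calc ENNReal.ofReal t ≤ mu0 {u | l ≤ |w u|} := ofReal_le_measure_rearr_le hw hwv ht hpos
      _ ≤ mu0 ({u | |w u| = l} ∪ {u | l < |w u|}) :=
          measure_mono fun u (hu : l ≤ |w u|) => (eq_or_lt_of_le hu).imp Eq.symm id
      _ ≤ _ := measure_union_le _ _
  obtain ⟨E, hEsub, hE, hEμ⟩ := exists_subset_mu0_eq hlevel hfin hr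
  have hdisj : Disjoint {u | l < |w u|} E :=
    disjoint_left.2 fun u (hu : l < |w u|) hu' => hu.ne' (hEsub hu')
  have hμ : mu0 ({u | l < |w u|} ∪ E) = ENNReal.ofReal t := by
    rw [measure_union hdisj hE, hEμ]
    exact add_tsub_cancel_of_le hd
  refine ⟨_, subset_union_left, union_subset ?_ fun u hu => (hEsub hu).ge, hμ.le, fun _ => hμ⟩
  exact fun u (hu : l < |w u|) => show l ≤ |w u| from hu.le

lemma exists_setLIntegral_rearr_le (hw : Measurable w) (hwv : VanishesInMeasure mu0 w) {t : ℝ}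
    (ht : 0 < t) : ∃ G, mu0 G ≤ ENNReal.ofReal t ∧
      ∫⁻ s in Ioc 0 t, ENNReal.ofReal (rearr mu0 w s) ≤ ∫⁻ u in G, ENNReal.ofReal |w u| ∂mu0 := by
  obtain ⟨G, hlt, hle, hGt, hGeq⟩ := exists_mu0_between_levelSets hw hwv ht
  refine ⟨G, hGt, ?_⟩
  rw [setLIntegral_rearr_Ioc hw hwv, setLIntegral_ofReal_abs_eq hw]
  refine setLIntegral_mono' measurableSet_Ioi fun a (ha : 0 < a) => ?_
  rcases le_or_gt (rearr mu0 w t) a with hla | hal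
  · rw [inter_eq_left.2 (show {u | a < |w u|} ⊆ G from fun u hu => hlt (hla.trans_lt hu))]
    exact min_le_right _ _
  · rw [inter_eq_right.2 (show G ⊆ {u | a < |w u|} from fun u hu => hal.trans_le (hle hu)),
      hGeq (ha.trans hal)]
    exact min_le_left _ _

lemma setLIntegral_mul_le_of_mu0_le {x g : ℝ → ℝ} (hx : Measurable x) (hg : Antitone g)
    (hg0 : ∀ u, 0 ≤ g u) {G : Set ℝ} {t : ℝ} (hG : mu0 G ≤ ENNReal.ofReal t) :
    ∫⁻ u in G, ENNReal.ofReal |x u| * ENNReal.ofReal (g u) ∂mu0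
      ≤ ∫⁻ b in Ioi 0, ∫⁻ a in Ioi 0,
          min (volume ({s | b < g s} ∩ Ioc 0 t)) (distribution mu0 x a) := by
  rw [setLIntegral_mul_ofReal_eq hx.abs.ennreal_ofReal.aemeasurable hg.measurable hg0]
  exact lintegral_mono fun b => (setLIntegral_ofReal_abs_le hx _).trans <|
    lintegral_mono fun a => min_le_min_right _ (mu0_inter_le_volume (hg.isLowerSet_lt b) hG)

end HalfLine

lemma exists_antitone_eqOn_Ici {z : ℝ → ℝ} (hz0 : ∀ u, 0 ≤ z u)
    (hz : AntitoneOn z (Ici 0)) :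
    ∃ z' : ℝ → ℝ, Antitone z' ∧ EqOn z' z (Ici 0) ∧ ∀ u, 0 ≤ z' u ∧ z' u ≤ z 0 :=
  ⟨fun u => z (max u 0),
    fun u v huv => hz (le_max_right u 0) (le_max_right v 0) (max_le_max_right 0 huv),
    fun _ hu => congrArg z (max_eq_left hu),
    fun u => ⟨hz0 _, hz self_mem_Ici (le_max_right u 0) (le_max_right u 0)⟩⟩

/-- Stability of submajorization under multiplication by a nonnegative nonincreasing
function: if `x ≺≺ y` and `z ≥ 0` is nonincreasing, then `xz ≺≺ y^* z`. -/
theorem submajorization_mul_antitone {x y z : ℝ → ℝ}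
    (hxm : Measurable x) (hym : Measurable y)
    (hxv : VanishesInMeasure mu0 x) (hyv : VanishesInMeasure mu0 y)
    (hz0 : ∀ u, 0 ≤ z u) (hz : AntitoneOn z (Set.Ici 0))
    (hmaj : ∀ t : ℝ, 0 < t →
      (∫⁻ s in Set.Ioc 0 t, ENNReal.ofReal (rearr mu0 x s))
        ≤ ∫⁻ s in Set.Ioc 0 t, ENNReal.ofReal (rearr mu0 y s)) :
    ∀ t : ℝ, 0 < t →
      (∫⁻ s in Set.Ioc 0 t, ENNReal.ofReal (rearr mu0 (x * z) s))
        ≤ ∫⁻ s in Set.Ioc 0 t, ENNReal.ofReal (rearr mu0 y s * z s) := by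
  intro t ht
  obtain ⟨z', hz'anti, hz'z, hz'bd⟩ := exists_antitone_eqOn_Ici hz0 hz
  have hz'0 : ∀ u, 0 ≤ z' u := fun u => (hz'bd u).1
  have hrearr : rearr mu0 (x * z) = rearr mu0 (x * z') := rearr_congr_ae <|
    (ae_restrict_mem measurableSet_Ici).mono fun u hu => by simp [hz'z hu]
  obtain ⟨G, hGt, hG⟩ := exists_setLIntegral_rearr_le (hxm.mul hz'anti.measurable)
    (hxv.mul_of_abs_le fun u => (abs_of_nonneg (hz'0 u)).trans_le (hz'bd u).2) ht
  calc ∫⁻ s in Ioc 0 t, ENNReal.ofReal (rearr mu0 (x * z) s)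
      ≤ ∫⁻ u in G, ENNReal.ofReal |x u| * ENNReal.ofReal (z' u) ∂mu0 := by
        simpa only [hrearr, Pi.mul_apply, abs_mul, abs_of_nonneg (hz'0 _),
          ENNReal.ofReal_mul (abs_nonneg _)] using hG
    _ ≤ ∫⁻ b in Ioi 0, ∫⁻ a in Ioi 0,
          min (volume ({s | b < z' s} ∩ Ioc 0 t)) (distribution mu0 x a) :=
        setLIntegral_mul_le_of_mu0_le hxm hz'anti hz'0 hGt
    _ ≤ ∫⁻ b in Ioi 0, ∫⁻ a in Ioi 0,
          min (volume ({s | b < z' s} ∩ Ioc 0 t)) (distribution mu0 y a) :=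
        lintegral_mono fun b => lintegral_min_distribution_le hxm hxv hym hyv hmaj
          ((measure_mono inter_subset_right).trans_lt measure_Ioc_lt_top).ne
    _ = ∫⁻ s in Ioc 0 t, ENNReal.ofReal (rearr mu0 y s) * ENNReal.ofReal (z' s) :=
        (setLIntegral_rearr_mul_eq hym hyv hz'anti hz'0 t).symm
    _ = ∫⁻ s in Ioc 0 t, ENNReal.ofReal (rearr mu0 y s * z s) :=
        setLIntegral_congr_fun measurableSet_Ioc fun s hs => by
          rw [hz'z (le_of_lt hs.1 : (0 : ℝ) ≤ s), ENNReal.ofReal_mul (rearr_nonneg s)]
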